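/- Let τ > 0, let g : ℝ → ℝ be odd, nondecreasing, and continuous, let G(s) := ∫₀ˢ g(r) dr, and suppose α₁, α₂ > 0 satisfy α₁ s g(s) ≤ G(s) ≤ α₂ s g(s) for all s ∈ ℝ. Let z : [0, 1] × ℝ → ℝ be continuously differentiable and satisfy τ ∂_t z + ∂_ϱ z = 0 on [0,1] × ℝ, and set Υ(t) := ∫₀¹ e^{−2τϱ} G(z(ϱ, t)) dϱ. Then for every t ∈ ℝ, Υ'(t) ≤ −2 Υ(t) + (α₂/τ) z(0, t) g(z(0, t)) − (α₁ e^{−2τ}/τ) z(1, t) g(z(1, t)). -/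

import Mathlib

/-!
Along the characteristics `t - τϱ = const` the transport equation makes `z` constant, so
`z(ϱ, t) = z(0, t - τϱ)`. Substituting `u = t - τϱ` turns `Υ(t)` into
`(e^{-2t}/τ) ∫_{t-τ}^t e^{2u} G(z(0, u)) du`, whose derivative is
`-2Υ(t) + (G(z(0,t)) - e^{-2τ} G(z(1,t)))/τ`; the two bounds on `G` finish the estimate.
-/

open MeasureTheory intervalIntegral Real Set

theorem transport_eq_shift {τ : ℝ} {z : ℝ → ℝ → ℝ}
    (hz : Differentiable ℝ fun q : ℝ × ℝ => z q.1 q.2) {ϱ : ℝ} (hϱ : 0 ≤ ϱ)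
    (hpde : ∀ x ∈ Icc 0 ϱ, ∀ t : ℝ,
      τ * deriv (fun t' => z x t') t + deriv (fun x' => z x' t) x = 0)
    (t : ℝ) :
    z ϱ t = z 0 (t - τ * ϱ) := by
  set F : ℝ × ℝ → ℝ := fun q => z q.1 q.2
  have hcomp : ∀ {u v : ℝ → ℝ} {u' v' x : ℝ}, HasDerivAt u u' x → HasDerivAt v v' x →
      HasDerivAt (fun s => z (u s) (v s)) (fderiv ℝ F (u x, v x) (u', v')) x :=
    fun hu hv => (hz _).hasFDerivAt.comp_hasDerivAt _ (hu.prodMk hv)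
  set c := t - τ * ϱ
  have hchar : ∀ x, HasDerivAt (fun x => z x (c + τ * x)) (fderiv ℝ F (x, c + τ * x) (1, τ)) x :=
    fun x => hcomp (hasDerivAt_id x) (by simpa using ((hasDerivAt_id x).const_mul τ).const_add c)
  have hconst : ∀ x ∈ Ico 0 ϱ, fderiv ℝ F (x, c + τ * x) (1, τ) = 0 := by
    intro x hx
    have hpde_x := hpde x (Ico_subset_Icc_self hx) (c + τ * x)
    rw [(hcomp (hasDerivAt_const (c + τ * x) x) (hasDerivAt_id' (c + τ * x))).deriv,
      (hcomp (hasDerivAt_id' x) (hasDerivAt_const x (c + τ * x))).deriv] at hpde_x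
    have hsplit : ((1 : ℝ), τ) = ((1 : ℝ), (0 : ℝ)) + τ • ((0 : ℝ), (1 : ℝ)) := by simp
    rw [hsplit, map_add, map_smul, smul_eq_mul]
    linarith
  simpa [c] using constant_of_has_deriv_right_zero
    (fun x _ => (hchar x).continuousAt.continuousWithinAt)
    (fun x hx => hconst x hx ▸ (hchar x).hasDerivWithinAt) ϱ ⟨hϱ, le_rfl⟩

theorem integral_exp_mul_comp_sub (H : ℝ → ℝ) {τ : ℝ} (hτ : τ ≠ 0) (c t : ℝ) :
    ∫ ϱ in (0 : ℝ)..1, exp (-c * τ * ϱ) * H (t - τ * ϱ)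
      = exp (-c * t) / τ * ∫ u in (t - τ)..t, exp (c * u) * H u := by
  have hexp : ∀ ϱ, exp (-c * τ * ϱ) = exp (-c * t) * exp (c * (t - τ * ϱ)) := by
    intro ϱ
    rw [← exp_add]
    ring_nf
  simp_rw [hexp, mul_assoc, intervalIntegral.integral_const_mul]
  rw [integral_comp_sub_mul (fun u => exp (c * u) * H u) hτ]
  simp only [mul_one, mul_zero, sub_zero, smul_eq_mul]
  ring

theorem hasDerivAt_integral_window {ψ : ℝ → ℝ} (hψ : Continuous ψ) (a t : ℝ) :
    HasDerivAt (fun r => ∫ u in (r - a)..r, ψ u) (ψ t - ψ (t - a)) t := by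
  have hprim : ∀ b, HasDerivAt (fun u => ∫ x in (0 : ℝ)..u, ψ x) (ψ b) b :=
    fun b => (hψ.integral_hasStrictDerivAt 0 b).hasDerivAt
  have hshift : HasDerivAt (fun r => ∫ x in (0 : ℝ)..(r - a), ψ x) (ψ (t - a)) t := by
    simpa using (hprim (t - a)).comp_sub_const t a
  refine ((hprim t).sub hshift).congr_of_eventuallyEq (Filter.Eventually.of_forall fun r => ?_)
  exact (integral_interval_sub_left (hψ.intervalIntegrable _ _) (hψ.intervalIntegrable _ _)).symm

theorem hasDerivAt_integral_exp_mul_transport {τ : ℝ} (hτ : τ ≠ 0) {G : ℝ → ℝ}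
    (hG : Continuous G) {z : ℝ → ℝ → ℝ} (hz : Differentiable ℝ fun q : ℝ × ℝ => z q.1 q.2)
    (hpde : ∀ ϱ ∈ Icc (0 : ℝ) 1, ∀ t : ℝ,
      τ * deriv (fun t' => z ϱ t') t + deriv (fun ϱ' => z ϱ' t) ϱ = 0)
    (c t : ℝ) :
    HasDerivAt (fun r => ∫ ϱ in (0 : ℝ)..1, exp (-c * τ * ϱ) * G (z ϱ r))
      (-c * (∫ ϱ in (0 : ℝ)..1, exp (-c * τ * ϱ) * G (z ϱ t))
        + (G (z 0 t) - exp (-c * τ) * G (z 1 t)) / τ) t := by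
  set ψ : ℝ → ℝ := fun u => exp (c * u) * G (z 0 u)
  have hrepr : ∀ r, ∫ ϱ in (0 : ℝ)..1, exp (-c * τ * ϱ) * G (z ϱ r)
      = exp (-c * r) / τ * ∫ u in (r - τ)..r, ψ u := by
    intro r
    rw [← integral_exp_mul_comp_sub _ hτ]
    refine integral_congr fun ϱ hϱ => ?_
    rw [uIcc_of_le zero_le_one] at hϱ
    rw [transport_eq_shift hz hϱ.1 (fun x hx => hpde x ⟨hx.1, hx.2.trans hϱ.2⟩) r]
  have hψ : Continuous ψ := by
    have : Continuous fun u => z 0 u := hz.continuous.comp (Continuous.prodMk_right 0)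
    fun_prop
  have hexp : HasDerivAt (fun r => exp (-c * r) / τ) (-c * (exp (-c * t) / τ)) t := by
    simpa [div_eq_mul_inv, mul_comm, mul_left_comm] using
      (((hasDerivAt_id' t).const_mul (-c)).exp).div_const τ
  simp_rw [hrepr]
  refine (hexp.mul (hasDerivAt_integral_window hψ τ t)).congr_deriv ?_
  have hnow : exp (-c * t) * ψ t = G (z 0 t) := by
    simp only [ψ, ← mul_assoc, ← exp_add, neg_mul, neg_add_cancel, exp_zero, one_mul]
  have hdelay : exp (-c * t) * ψ (t - τ) = exp (-c * τ) * G (z 1 t) := by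
    rw [transport_eq_shift hz zero_le_one hpde t, mul_one, ← mul_assoc, ← exp_add]
    ring_nf
  linear_combination (hnow - hdelay) / τ

theorem stmt_13_general (τ : ℝ) (hτ : 0 < τ)
    (g : ℝ → ℝ)
    (hcont : Continuous g)
    (G : ℝ → ℝ) (hG : ∀ s, G s = ∫ r in (0:ℝ)..s, g r)
    (α₁ α₂ : ℝ)
    (hlow : ∀ s, α₁ * (s * g s) ≤ G s) (hupp : ∀ s, G s ≤ α₂ * (s * g s))
    (z : ℝ → ℝ → ℝ) (hz : ContDiff ℝ 1 fun q : ℝ × ℝ => z q.1 q.2)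
    (hpde : ∀ ϱ ∈ Set.Icc (0:ℝ) 1, ∀ t : ℝ,
      τ * deriv (fun t' => z ϱ t') t + deriv (fun ϱ' => z ϱ' t) ϱ = 0)
    (Υ : ℝ → ℝ)
    (hΥ : ∀ r : ℝ, Υ r = ∫ ϱ in (0:ℝ)..1, Real.exp (-2 * τ * ϱ) * G (z ϱ r))
    (t : ℝ) :
    deriv Υ t
      ≤ -2 * Υ t + (α₂ / τ) * (z 0 t * g (z 0 t))
        - (α₁ * Real.exp (-2 * τ) / τ) * (z 1 t * g (z 1 t)) := by
  have hGc : Continuous G := by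
    rw [funext hG]
    exact continuous_primitive (fun a b => hcont.intervalIntegrable a b) 0
  obtain rfl : Υ = _ := funext hΥ
  rw [(hasDerivAt_integral_exp_mul_transport hτ.ne' hGc (hz.differentiable one_ne_zero)
    hpde 2 t).deriv]
  have hnow := mul_le_mul_of_nonneg_left (hupp (z 0 t)) (inv_pos.2 hτ).le
  have hdelay := mul_le_mul_of_nonneg_left (hlow (z 1 t)) (div_pos (exp_pos (-2 * τ)) hτ).le
  linear_combination hnow + hdelay

/-- Differential inequality for `Υ(t) = ∫₀¹ e^{−2τϱ} G(z(ϱ,t)) dϱ`: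
`Υ'(t) ≤ −2Υ(t) + (α₂/τ) z(0,t) g(z(0,t)) − (α₁ e^{−2τ}/τ) z(1,t) g(z(1,t))`. -/
theorem stmt_13 (τ : ℝ) (hτ : 0 < τ)
    (g : ℝ → ℝ) (hodd : ∀ s, g (-s) = -g s) (hmono : Monotone g)
    (hcont : Continuous g)
    (G : ℝ → ℝ) (hG : ∀ s, G s = ∫ r in (0:ℝ)..s, g r)
    (α₁ α₂ : ℝ) (hα₁ : 0 < α₁) (hα₂ : 0 < α₂)
    (hlow : ∀ s, α₁ * (s * g s) ≤ G s) (hupp : ∀ s, G s ≤ α₂ * (s * g s))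
    (z : ℝ → ℝ → ℝ) (hz : ContDiff ℝ 1 fun q : ℝ × ℝ => z q.1 q.2)
    (hpde : ∀ ϱ ∈ Set.Icc (0:ℝ) 1, ∀ t : ℝ,
      τ * deriv (fun t' => z ϱ t') t + deriv (fun ϱ' => z ϱ' t) ϱ = 0)
    (Υ : ℝ → ℝ)
    (hΥ : ∀ r : ℝ, Υ r = ∫ ϱ in (0:ℝ)..1, Real.exp (-2 * τ * ϱ) * G (z ϱ r))
    (t : ℝ) :
    deriv Υ t
      ≤ -2 * Υ t + (α₂ / τ) * (z 0 t * g (z 0 t))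
        - (α₁ * Real.exp (-2 * τ) / τ) * (z 1 t * g (z 1 t)) :=
  stmt_13_general τ hτ g hcont G hG α₁ α₂ hlow hupp z hz hpde Υ hΥ t
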